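/- arXiv:1310.6648 — 7 statements merged into one kernel-verified Lean document; each statement's English description precedes it below -/
import Mathlib

section
/- Let n be a positive integer and let M_{C_n} be the graph monoid of the Cayley graph C_n. Then the set of nonidentity elements of M_{C_n} forms an abelian group under the monoid addition, whose identity element is the class [𝟙] of the all-ones vector. Concretely: for every x : ZMod n → ℕ with [x] ≠ [0] one has [x] + [𝟙] = [x], and there exists y : ZMod n → ℕ with [y] ≠ [0] and [x] + [y] = [𝟙]; moreover, for all x, y with [x] ≠ [0] and [y] ≠ [0] one has [x] + [y] ≠ [0]. -/
/-- The generating relations of the graph monoid of `C_n`: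
`e_i ~ e_{i-1} + e_{i+1}` for each `i : ZMod n`. -/
def graphRel (n : ℕ) (x y : ZMod n → ℕ) : Prop :=
  ∃ i : ZMod n, x = Pi.single i 1 ∧ y = Pi.single (i - 1) 1 + Pi.single (i + 1) 1

/-- The additive congruence on the free abelian monoid `ZMod n → ℕ`
generated by the relations `e_i ~ e_{i-1} + e_{i+1}`. -/
def graphCon (n : ℕ) : AddCon (ZMod n → ℕ) :=
  addConGen (graphRel n)

/-- The graph monoid `M_{C_n}` of the Cayley graph `C_n`. -/
abbrev graphMonoid (n : ℕ) : Type :=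
  (graphCon n).Quotient

/-- The congruence class `[x]` of `x : ZMod n → ℕ` in the graph monoid `M_{C_n}`. -/
def cls (n : ℕ) (x : ZMod n → ℕ) : graphMonoid n :=
  (x : (graphCon n).Quotient)

/-!
Unfolding a chip around the cycle, `e_{i+1} ~ e_i + e_{i+2} ~ e_i + e_{i+1} + e_{i+3} ~ ⋯`, after `n`
steps yields `e_{i+1} ~ 𝟙 + e_{i+1}`; hence `[x] + [𝟙] = [x]` whenever `x ≠ 0`. Topping `x` up to a
constant vector `𝟙 + m • 𝟙` gives an inverse. Finally no defining relation involves `0`, so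
`[x] = [0]` only for `x = 0`, and in `ℕ^n` a sum vanishes only if both summands do.
-/

theorem AddCon.eq_zero_iff_eq_zero_of_addConGen {M : Type*} [AddCommMonoid M]
    [Subsingleton (AddUnits M)] {r : M → M → Prop} (hr : ∀ a b, r a b → (a = 0 ↔ b = 0))
    {a b : M} (h : addConGen r a b) :
    a = 0 ↔ b = 0 :=
  let zeroCon : AddCon M :=
    { r := fun a b => (a = 0 ↔ b = 0)
      iseqv := ⟨fun _ => Iff.rfl, Iff.symm, Iff.trans⟩
      add' := fun h₁ h₂ => by simp only [add_eq_zero, h₁, h₂] }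
  AddCon.addConGen_le (c := zeroCon) |>.mpr hr h

theorem cls_eq_cls_iff {n : ℕ} {x y : ZMod n → ℕ} : cls n x = cls n y ↔ graphCon n x y :=
  AddCon.eq _

theorem cls_add (n : ℕ) (x y : ZMod n → ℕ) : cls n (x + y) = cls n x + cls n y := rfl

theorem cls_eq_zero_iff {n : ℕ} {x : ZMod n → ℕ} : cls n x = cls n 0 ↔ x = 0 := by
  refine ⟨fun h => ?_, fun h => h ▸ rfl⟩
  refine (AddCon.eq_zero_iff_eq_zero_of_addConGen ?_ (cls_eq_cls_iff.mp h)).mpr rfl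
  rintro _ _ ⟨i, rfl, rfl⟩
  simp [Pi.single_eq_zero_iff]

theorem graphCon_single_add_one {n : ℕ} (i : ZMod n) :
    graphCon n (Pi.single (i + 1) 1) (Pi.single i 1 + Pi.single (i + 2) 1) := by
  have h : graphCon n _ _ := AddConGen.Rel.of (r := graphRel n) _ _ ⟨i + 1, rfl, rfl⟩
  rwa [add_sub_cancel_right, add_assoc, one_add_one_eq_two] at h

theorem graphCon_single_sum_range {n : ℕ} (i : ZMod n) (k : ℕ) :
    graphCon n (Pi.single (i + 1) 1)
      (∑ j ∈ Finset.range k, Pi.single (i + j) 1 + Pi.single (i + k + 1) 1) := by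
  induction k with
  | zero => simpa using (graphCon n).refl _
  | succ k ih =>
    refine (graphCon n).trans ih ?_
    have h := (graphCon n).add ((graphCon n).refl (∑ j ∈ Finset.range k, Pi.single (i + j) 1))
      (graphCon_single_add_one (i + (k : ZMod n)))
    convert h using 1
    have hidx : i + ((k + 1 : ℕ) : ZMod n) + 1 = i + k + 2 := by push_cast; ring
    rw [Finset.sum_range_succ, add_assoc, hidx]

theorem sum_range_single_add_eq_one {n : ℕ} (hn : 0 < n) (i : ZMod n) :
    ∑ j ∈ Finset.range n, (Pi.single (i + j) 1 : ZMod n → ℕ) = 1 := by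
  obtain ⟨m, rfl⟩ := Nat.exists_eq_add_one_of_ne_zero hn.ne'
  calc ∑ j ∈ Finset.range (m + 1), (Pi.single (i + j) 1 : ZMod (m + 1) → ℕ)
      = ∑ j : ZMod (m + 1), Pi.single (i + j) 1 :=
        (Fin.sum_univ_eq_sum_range (fun j => Pi.single (i + j) 1) _).symm.trans
          (Fintype.sum_congr _ _ fun j =>
            congrArg (fun a => Pi.single (i + a) 1) (ZMod.natCast_zmod_val (n := m + 1) j))
    _ = ∑ j : ZMod (m + 1), Pi.single j 1 := Equiv.sum_comp (Equiv.addLeft i) (Pi.single · 1)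
    _ = 1 := Finset.univ_sum_single _

theorem cls_single_add_one {n : ℕ} (hn : 0 < n) (i : ZMod n) :
    cls n (Pi.single i 1 + 1) = cls n (Pi.single i 1) := by
  have h := graphCon_single_sum_range (i - 1) n
  rw [sub_add_cancel, sum_range_single_add_eq_one hn, ZMod.natCast_self, add_zero,
    sub_add_cancel] at h
  rw [add_comm]
  exact (cls_eq_cls_iff.mpr h).symm

theorem cls_add_one {n : ℕ} (hn : 0 < n) {x : ZMod n → ℕ} (hx : x ≠ 0) :
    cls n (x + 1) = cls n x := by
  obtain ⟨i, hi⟩ := Function.ne_iff.mp hx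
  have hle : Pi.single i 1 ≤ x := fun j => by
    rcases eq_or_ne j i with rfl | hj <;> simp_all [Nat.one_le_iff_ne_zero]
  obtain ⟨y, rfl⟩ := exists_add_of_le hle
  rw [add_right_comm, cls_add, cls_single_add_one hn, ← cls_add]

theorem cls_add_nsmul_one {n : ℕ} (hn : 0 < n) {x : ZMod n → ℕ} (hx : x ≠ 0) (k : ℕ) :
    cls n (x + k • 1) = cls n x := by
  induction k with
  | zero => rw [zero_smul, add_zero]
  | succ k ih =>
    have hxk : x + k • 1 ≠ 0 := fun h => hx (add_eq_zero.mp h).1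
    rw [succ_nsmul, ← add_assoc, cls_add_one hn hxk, ih]

theorem exists_ne_zero_cls_add_eq_cls_one {n : ℕ} (hn : 0 < n) (x : ZMod n → ℕ) :
    ∃ y, y ≠ 0 ∧ cls n (x + y) = cls n 1 := by
  have : NeZero n := ⟨hn.ne'⟩
  obtain ⟨m, hm⟩ := (Set.finite_range x).bddAbove
  have hle : x ≤ m • 1 := fun i => by simpa using hm ⟨i, rfl⟩
  refine ⟨m • 1 - x + 1, fun h => by simpa using congrFun h 0, ?_⟩
  rw [← add_assoc, add_tsub_cancel_of_le hle, add_comm, cls_add_nsmul_one hn one_ne_zero]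

theorem graphMonoid_nonzero_classes_form_group (n : ℕ) (hn : 0 < n) :
    (∀ x : ZMod n → ℕ, cls n x ≠ cls n 0 → cls n x + cls n 1 = cls n x) ∧
    (∀ x : ZMod n → ℕ, cls n x ≠ cls n 0 →
      ∃ y : ZMod n → ℕ, cls n y ≠ cls n 0 ∧ cls n x + cls n y = cls n 1) ∧
    (∀ x y : ZMod n → ℕ, cls n x ≠ cls n 0 → cls n y ≠ cls n 0 →
      cls n x + cls n y ≠ cls n 0) := by
  simp only [ne_eq, cls_eq_zero_iff, ← cls_add]
  exact ⟨fun x hx => cls_add_one hn hx,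
    fun x _ => exists_ne_zero_cls_add_eq_cls_one hn x,
    fun x y hx _ h => hx (add_eq_zero.mp h).1⟩
end

section
/- Let n be a positive integer. For every i ∈ ℤ/nℤ, in the cokernel group G_n one has [e_i] = -[e_{i+3}], where i+3 is computed in ℤ/nℤ. -/
open Matrix

/-- The adjacency matrix of the Cayley graph `C_n` of `ℤ/nℤ` with respect to `{1, n-1}`. -/
def cayleyAdj (n : ℕ) : Matrix (ZMod n) (ZMod n) ℤ :=
  Matrix.of fun i j => (if j = i + 1 then 1 else 0) + (if j = i - 1 then 1 else 0)

/-- The matrix `B_n = I - A_nᵀ`. -/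
def cayleyB (n : ℕ) : Matrix (ZMod n) (ZMod n) ℤ :=
  1 - (cayleyAdj n)ᵀ

/-- The image of `B_n`, viewed as a linear map by matrix-vector multiplication. -/
def imB (n : ℕ) [NeZero n] : Submodule ℤ (ZMod n → ℤ) :=
  LinearMap.range (cayleyB n).mulVecLin

/-- The cokernel group `G_n = (ZMod n → ℤ) ⧸ Im(B_n)`. -/
abbrev cayleyCoker (n : ℕ) [NeZero n] : Type :=
  (ZMod n → ℤ) ⧸ imB n

/-- The class `[e_i]` of the standard basis vector `e_i` in `G_n`. -/
def eClass (n : ℕ) [NeZero n] (i : ZMod n) : cayleyCoker n :=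
  Submodule.Quotient.mk (Pi.single i 1)

theorem cayleyB_mulVec_single (n : ℕ) [NeZero n] (k : ZMod n) :
    cayleyB n *ᵥ Pi.single k 1 = Pi.single k 1 - Pi.single (k + 1) 1 - Pi.single (k - 1) 1 := by
  funext j
  simp only [mulVec_single_one, col_apply, cayleyB, cayleyAdj, Matrix.sub_apply, one_apply, transpose_apply,
    of_apply, Pi.sub_apply, Pi.single_apply, eq_sub_iff_add_eq, ← sub_eq_iff_eq_add]
  split_ifs <;> simp_all

theorem eClass_eq_add_eClass (n : ℕ) [NeZero n] (k : ZMod n) :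
    eClass n k = eClass n (k + 1) + eClass n (k - 1) := by
  rw [← sub_eq_zero, sub_add_eq_sub_sub]
  exact (Submodule.Quotient.mk_eq_zero _).2 ⟨Pi.single k 1, cayleyB_mulVec_single n k⟩

theorem eClass_eq_neg_add_three (n : ℕ) [NeZero n] (i : ZMod n) :
    eClass n i = - eClass n (i + 3) := by
  have h₁ := eClass_eq_add_eClass n (i + 1)
  have h₂ := eClass_eq_add_eClass n (i + 2)
  rw [add_sub_cancel_right, add_assoc, one_add_one_eq_two] at h₁
  rw [add_assoc, show (2 : ZMod n) + 1 = 3 by norm_num, show i + 2 - 1 = i + 1 by ring] at h₂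
  rw [h₂, add_right_comm, right_eq_add] at h₁
  exact (neg_eq_of_add_eq_zero_right h₁).symm
end

section
/- Let n be a positive integer. For every i ∈ ℤ/nℤ, in the cokernel group G_n one has [e_i] = [e_{i+6}], where i+6 is computed in ℤ/nℤ. -/
/-!
`B_n e_j = e_j - e_{j+1} - e_{j-1}`, so in the cokernel `[e_j] = [e_{j+1}] + [e_{j-1}]`.
Any such sequence satisfies `x_{j+3} = -x_j` (add the recurrences at `j + 1` and `j + 2`),
hence `x_{j+6} = x_j`.
-/

open Matrix

theorem Function.antiperiodic_three_of_eq_add_add_sub_one {R G : Type*} [AddGroupWithOne R]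
    [AddCommGroup G] {f : R → G} (hf : ∀ j, f j = f (j + 1) + f (j - 1)) :
    Function.Antiperiodic f 3 := by
  intro j
  have h₁ := hf (j + 1 + 1)
  have h₂ := hf (j + 1)
  rw [add_sub_cancel_right] at h₁ h₂
  rw [show (3 : R) = 1 + 1 + 1 by norm_num, ← add_assoc, ← add_assoc]
  linear_combination (norm := abel) -h₁ - h₂

theorem cayleyB_mulVec_single_one (n : ℕ) [NeZero n] (j : ZMod n) :
    cayleyB n *ᵥ Pi.single j 1 = Pi.single j 1 - Pi.single (j + 1) 1 - Pi.single (j - 1) 1 := by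
  ext i
  simp only [mulVec_single_one, cayleyB, cayleyAdj, col_apply, Matrix.sub_apply, one_apply,
    transpose_apply, of_apply, Pi.sub_apply, Pi.single_apply]
  ring

theorem eClass_eq_add_add_sub_one (n : ℕ) [NeZero n] (j : ZMod n) :
    eClass n j = eClass n (j + 1) + eClass n (j - 1) := by
  rw [eClass, eClass, eClass, ← Submodule.Quotient.mk_add, Submodule.Quotient.eq]
  exact ⟨Pi.single j 1, by rw [mulVecLin_apply, cayleyB_mulVec_single_one, sub_sub]⟩

theorem eClass_eq_add_six (n : ℕ) [NeZero n] (i : ZMod n) :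
    eClass n i = eClass n (i + 6) := by
  have h := (Function.antiperiodic_three_of_eq_add_add_sub_one
    (eClass_eq_add_add_sub_one n)).periodic_two_mul i
  rwa [show (2 * 3 : ZMod n) = 6 by norm_num, eq_comm] at h
end

section
/- Let n and m be positive integers with n ≡ m (mod 6). Then the cokernel groups G_n and G_m are isomorphic as abelian groups. -/
open Matrix

/-!
`B_n` is the circulant matrix of `b = 1 - g - g⁻¹` in the group ring `ℤ[ℤ/n] ≅ ℤ[X]/(X^n - 1)`,
`g = [1]`, so `G_n ≅ ℤ[ℤ/n]/(b)`. As `g` is a unit, `(b) = (g² - g + 1)`, hence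
`G_n ≅ ℤ[X]/(X^n - 1, X² - X + 1)`. Since `X² - X + 1` (the sixth cyclotomic polynomial) divides
`X^6 - 1`, this ideal only depends on `n mod 6`.
-/

open Polynomial

section Circulant

variable {R G : Type*}

theorem AddMonoidAlgebra.circulant_coeff_mulVec [Semiring R] [AddGroup G] [Fintype G]
    (x y : AddMonoidAlgebra R G) : circulant ⇑x.coeff *ᵥ ⇑y.coeff = ⇑(x * y).coeff := by
  ext g
  rw [AddMonoidAlgebra.coeff_mul_apply_right, Finsupp.sum_fintype _ _ (by simp)]
  simp [mulVec, dotProduct, sub_eq_add_neg]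

variable (R G) in
noncomputable def AddMonoidAlgebra.linearEquivFunOnFinite [Semiring R] [Fintype G] :
    AddMonoidAlgebra R G ≃ₗ[R] (G → R) :=
  (AddMonoidAlgebra.coeffLinearEquiv R).trans (Finsupp.linearEquivFunOnFinite R R G)

variable [CommRing R] [AddCommGroup G] [Fintype G]

theorem range_circulant_mulVecLin (x : AddMonoidAlgebra R G) :
    LinearMap.range (circulant ⇑x.coeff).mulVecLin =
      ((Ideal.span {x}).restrictScalars R).map
        (AddMonoidAlgebra.linearEquivFunOnFinite R G : AddMonoidAlgebra R G →ₗ[R] G → R) := by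
  ext v
  simp only [LinearMap.mem_range, mulVecLin_apply, Submodule.mem_map,
    Submodule.restrictScalars_mem, Ideal.mem_span_singleton, LinearEquiv.coe_coe]
  constructor
  · rintro ⟨w, rfl⟩
    refine ⟨x * AddMonoidAlgebra.ofCoeff (Finsupp.equivFunOnFinite.symm w), dvd_mul_right _ _, ?_⟩
    exact (AddMonoidAlgebra.circulant_coeff_mulVec x _).symm
  · rintro ⟨_, ⟨y, rfl⟩, rfl⟩
    exact ⟨y.coeff, AddMonoidAlgebra.circulant_coeff_mulVec x y⟩

noncomputable def circulantCokerEquiv (x : AddMonoidAlgebra R G) :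
    ((G → R) ⧸ LinearMap.range (circulant ⇑x.coeff).mulVecLin) ≃ₗ[R]
      AddMonoidAlgebra R G ⧸ Ideal.span {x} :=
  (Submodule.Quotient.equiv _ _ _ (range_circulant_mulVecLin x).symm).symm.trans
    (Submodule.Quotient.restrictScalarsEquiv R _)

end Circulant

noncomputable def RingHom.quotientKerSupEquivOfSurjective {A B : Type*} [CommRing A] [CommRing B]
    {f : A →+* B} (hf : Function.Surjective f) (I : Ideal A) :
    A ⧸ (RingHom.ker f ⊔ I) ≃+* B ⧸ I.map f :=
  (Ideal.quotEquivOfEq (by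
      rw [← RingHom.comap_ker, Ideal.mk_ker, Ideal.comap_map_of_surjective' f hf, sup_comm])).trans
    (RingHom.quotientKerEquivOfSurjective (f := (Ideal.Quotient.mk (I.map f)).comp f)
      (Ideal.Quotient.mk_surjective.comp hf))

theorem Ideal.span_pow_sub_one_pair_eq_mod {A : Type*} [CommRing A] {x q : A} {d : ℕ}
    (hq : q ∣ x ^ d - 1) (n : ℕ) :
    Ideal.span {x ^ n - 1, q} = Ideal.span {x ^ (n % d) - 1, q} := by
  obtain ⟨z, hz⟩ : q ∣ x ^ (d * (n / d)) - 1 :=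
    hq.trans (by simpa [pow_mul] using sub_dvd_pow_sub_pow (x ^ d) 1 (n / d))
  have hsplit : x ^ n - 1 = (x ^ (n % d) - 1) + (x ^ (n % d) * z) * q := by
    rw [mul_assoc, mul_comm z, ← hz, mul_sub, ← pow_add, Nat.mod_add_div]
    ring
  rw [hsplit, Ideal.span_pair_add_mul_right]

section CyclicGroupRing

variable (R : Type*) [CommRing R] (n : ℕ)

noncomputable abbrev toZModGroupRing : R[X] →ₐ[R] AddMonoidAlgebra R (ZMod n) :=
  aeval (AddMonoidAlgebra.single 1 1)

theorem toZModGroupRing_X_pow (k : ℕ) :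
    toZModGroupRing R n (X ^ k) = AddMonoidAlgebra.single (k : ZMod n) 1 := by
  rw [map_pow, aeval_X, AddMonoidAlgebra.single_pow, one_pow, nsmul_one]

theorem toZModGroupRing_monomial (k : ℕ) (c : R) :
    toZModGroupRing R n (monomial k c) = AddMonoidAlgebra.single (k : ZMod n) c := by
  rw [← C_mul_X_pow_eq_monomial, map_mul, aeval_C, toZModGroupRing_X_pow]
  simp

theorem toZModGroupRing_surjective [NeZero n] : Function.Surjective (toZModGroupRing R n) := by
  intro x
  induction x using AddMonoidAlgebra.induction with
  | zero => exact ⟨0, map_zero _⟩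
  | single_add a c x _ _ ih =>
    obtain ⟨p, rfl⟩ := ih
    exact ⟨monomial a.val c + p, by rw [map_add, toZModGroupRing_monomial, ZMod.natCast_zmod_val]⟩

noncomputable def zmodGroupRingToPolynomial : AddMonoidAlgebra R (ZMod n) →ₗ[R] R[X] :=
  Finsupp.lsum R (fun a : ZMod n => monomial a.val) ∘ₗ
    (AddMonoidAlgebra.coeffLinearEquiv R).toLinearMap

theorem zmodGroupRingToPolynomial_single (a : ZMod n) (c : R) :
    zmodGroupRingToPolynomial R n (AddMonoidAlgebra.single a c) = monomial a.val c :=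
  Finsupp.lsum_single R _ a c

theorem zmodGroupRingToPolynomial_toZModGroupRing {p : R[X]} (hp : p.natDegree < n) :
    zmodGroupRingToPolynomial R n (toZModGroupRing R n p) = p := by
  conv_lhs => rw [p.as_sum_range' n hp]
  conv_rhs => rw [p.as_sum_range' n hp]
  simp only [map_sum, toZModGroupRing_monomial, zmodGroupRingToPolynomial_single]
  refine Finset.sum_congr rfl fun k hk => ?_
  rw [ZMod.val_cast_of_lt (Finset.mem_range.mp hk)]

theorem ker_toZModGroupRing [Nontrivial R] [NeZero n] :
    RingHom.ker (toZModGroupRing R n) = Ideal.span {X ^ n - 1} := by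
  have hmonic : (X ^ n - 1 : R[X]).Monic := by
    simpa using monic_X_pow_sub_C (1 : R) (NeZero.ne n)
  have hdeg : (X ^ n - 1 : R[X]).natDegree = n := by
    simpa using natDegree_X_pow_sub_C (n := n) (r := (1 : R))
  have hzero : toZModGroupRing R n (X ^ n - 1) = 0 := by
    rw [map_sub, toZModGroupRing_X_pow, ZMod.natCast_self, map_one, sub_eq_zero]
    rfl
  refine le_antisymm (fun p hp => ?_) ((Ideal.span_singleton_le_iff_mem _).mpr hzero)
  rw [Ideal.mem_span_singleton, ← modByMonic_eq_zero_iff_dvd hmonic]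
  have hlt : (p %ₘ (X ^ n - 1)).natDegree < n :=
    (natDegree_modByMonic_lt p hmonic fun h => NeZero.ne n (by simpa [h] using hdeg.symm)).trans_eq
      hdeg
  have hker : toZModGroupRing R n (p %ₘ (X ^ n - 1)) = 0 := by
    rw [modByMonic_eq_sub_mul_div p, map_sub, map_mul, RingHom.mem_ker.mp hp, hzero,
      zero_mul, sub_zero]
  rw [← zmodGroupRingToPolynomial_toZModGroupRing R n hlt, hker, map_zero]

end CyclicGroupRing

section CayleyB

variable (R : Type*) [CommRing R] (n : ℕ)

noncomputable def cayleyBElem : AddMonoidAlgebra R (ZMod n) :=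
  1 - AddMonoidAlgebra.single 1 1 - AddMonoidAlgebra.single (-1) 1

theorem cayleyB_eq_circulant : cayleyB n = circulant ⇑(cayleyBElem ℤ n).coeff := by
  ext i j
  have h0 : (0 = i - j) ↔ i = j := eq_comm.trans sub_eq_zero
  have h1 : (1 = i - j) ↔ i = j + 1 := eq_sub_iff_add_eq.trans (by rw [add_comm, eq_comm])
  have h2 : (-1 = i - j) ↔ i = j - 1 := eq_sub_iff_add_eq.trans (by rw [← sub_eq_neg_add, eq_comm])
  simp only [cayleyB, cayleyAdj, Matrix.sub_apply, one_apply, transpose_apply, of_apply,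
    cayleyBElem, AddMonoidAlgebra.one_def, AddMonoidAlgebra.coeff_sub,
    AddMonoidAlgebra.coeff_single, Finsupp.coe_sub, circulant_apply, Pi.sub_apply,
    Finsupp.single_apply, h0, h1, h2]
  ring

theorem span_cayleyBElem :
    Ideal.span {cayleyBElem R n} = Ideal.span {toZModGroupRing R n (X ^ 2 - X + 1)} := by
  have hinv :
      AddMonoidAlgebra.single (1 : ZMod n) (1 : R) * AddMonoidAlgebra.single (-1) 1 = 1 := by
    rw [AddMonoidAlgebra.single_mul_single, add_neg_cancel, mul_one]
    rfl
  have hfactor : toZModGroupRing R n (X ^ 2 - X + 1) =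
      cayleyBElem R n * -AddMonoidAlgebra.single 1 1 := by
    simp only [map_add, map_sub, map_pow, aeval_X, map_one, cayleyBElem]
    linear_combination -hinv
  rw [hfactor, Ideal.span_singleton_mul_right_unit (IsUnit.of_mul_eq_one
    (-AddMonoidAlgebra.single (-1) 1) (by rw [neg_mul_neg, hinv]))]

end CayleyB

noncomputable def cayleyCokerEquiv (n : ℕ) [NeZero n] :
    cayleyCoker n ≃+ ℤ[X] ⧸ Ideal.span {(X ^ n - 1 : ℤ[X]), X ^ 2 - X + 1} :=
  let φ : ℤ[X] →+* AddMonoidAlgebra ℤ (ZMod n) := toZModGroupRing ℤ n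
  have himB : imB n = LinearMap.range (circulant ⇑(cayleyBElem ℤ n).coeff).mulVecLin := by
    rw [imB, cayleyB_eq_circulant]
  have hspan : Ideal.span {cayleyBElem ℤ n} = (Ideal.span {X ^ 2 - X + 1}).map φ := by
    rw [span_cayleyBElem, Ideal.map_span, Set.image_singleton]
    rfl
  have hker :
      RingHom.ker φ ⊔ Ideal.span {X ^ 2 - X + 1} = Ideal.span {X ^ n - 1, X ^ 2 - X + 1} := by
    rw [Ideal.span_insert, ← ker_toZModGroupRing]
    rfl
  ((Submodule.quotEquivOfEq _ _ himB).trans (circulantCokerEquiv _)).toAddEquiv.trans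
    ((Ideal.quotEquivOfEq hspan).trans
      ((RingHom.quotientKerSupEquivOfSurjective (f := φ) (toZModGroupRing_surjective ℤ n)
          _).symm.trans (Ideal.quotEquivOfEq hker))).toAddEquiv

theorem coker_iso_of_modeq_six (n m : ℕ) [NeZero n] [NeZero m]
    (h : n ≡ m [MOD 6]) :
    Nonempty (cayleyCoker n ≃+ cayleyCoker m) := by
  have hdvd : (X ^ 2 - X + 1 : ℤ[X]) ∣ X ^ 6 - 1 := ⟨X ^ 4 + X ^ 3 - X - 1, by ring⟩
  have hspan : Ideal.span {(X ^ n - 1 : ℤ[X]), X ^ 2 - X + 1} =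
      Ideal.span {(X ^ m - 1 : ℤ[X]), X ^ 2 - X + 1} := by
    rw [Ideal.span_pow_sub_one_pair_eq_mod hdvd, Ideal.span_pow_sub_one_pair_eq_mod hdvd m, h]
  exact ⟨(cayleyCokerEquiv n).trans
    ((Ideal.quotEquivOfEq hspan).toAddEquiv.trans (cayleyCokerEquiv m).symm)⟩
end

section
/- Let n be a positive integer. In the graph monoid M_{C_n}, the class of the all-ones vector is idempotent: [𝟙 + 𝟙] = [𝟙], i.e., the congruence generated by the relations e_i ~ e_{i-1} + e_{i+1} relates 𝟙 + 𝟙 to 𝟙. (Equivalently, the element ∑_{i=1}^n [v_i] is the identity element of the group of nonidentity elements of M_{C_n}.) -/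
/-! Writing `𝟙 = ∑ᵢ eᵢ`, the generating relations give `[𝟙] = ∑ᵢ ([e_{i-1}] + [e_{i+1}])`,
and each of the two resulting sums is `[𝟙]` again, reindexed by a translation of `ℤ/nℤ`. -/

theorem Fintype.sum_eq_sum_add_sum_of_forall_eq_add {G M : Type*} [AddGroup G] [Fintype G]
    [AddCommMonoid M] (f : G → M) (c d : G) (hf : ∀ i, f i = f (i + c) + f (i + d)) :
    ∑ i, f i = ∑ i, f i + ∑ i, f i :=
  calc ∑ i, f i = ∑ i, (f (i + c) + f (i + d)) := Fintype.sum_congr _ _ hf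
    _ = ∑ i, f i + ∑ i, f i := by
      rw [Finset.sum_add_distrib, Fintype.sum_equiv (Equiv.addRight c) (f <| · + c) f fun _ => rfl,
        Fintype.sum_equiv (Equiv.addRight d) (f <| · + d) f fun _ => rfl]

theorem cls_single_eq_add (n : ℕ) (i : ZMod n) :
    cls n (Pi.single i 1) = cls n (Pi.single (i - 1) 1) + cls n (Pi.single (i + 1) 1) := by
  rw [← cls_add]
  exact Quotient.sound (AddConGen.Rel.of _ _ ⟨i, rfl, rfl⟩)

theorem cls_one_eq_sum (n : ℕ) [NeZero n] :
    cls n 1 = ∑ i : ZMod n, cls n (Pi.single i 1) := by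
  rw [← Finset.univ_sum_single (1 : ZMod n → ℕ)]
  exact map_sum (AddCon.mk' (graphCon n)) _ Finset.univ

theorem cls_allOnes_idempotent (n : ℕ) (hn : 0 < n) :
    cls n (1 + 1) = cls n 1 := by
  have : NeZero n := ⟨hn.ne'⟩
  rw [cls_add, cls_one_eq_sum]
  refine (Fintype.sum_eq_sum_add_sum_of_forall_eq_add _ (-1) 1 fun i => ?_).symm
  rw [← sub_eq_add_neg]
  exact cls_single_eq_add n i
end

section
/- Let n be a positive integer. Then det(1 - A_nᵀ) ≤ 0, where the determinant is taken over the integers. -/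
open Matrix

/-! Let `P` be the permutation matrix of `i ↦ i + 1`, so that `A_n = P + Pᵀ` and `Pᵀ P = 1`.
Then `(1 - A_nᵀ) P = -(P² - P + 1)`. Over `ℂ`, `P² - P + 1 = (P - ω)(P - ω̄)` for a primitive sixth
root of unity `ω`, and since `P` is real, `det (P - ω̄)` is the conjugate of `det (P - ω)`; hence
`det (P² - P + 1) = |det (P - ω)|² ≥ 0`. As `P` permutes `ℤ/nℤ` by an `n`-cycle,
`det P = (-1)^(n-1)`, and comparing signs gives `det (1 - A_nᵀ) = -det (P² - P + 1) ≤ 0`. -/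

namespace Matrix

variable {ι : Type*} [Fintype ι] [DecidableEq ι]

theorem det_mul_self_add_smul_add_smul_one_nonneg {b c : ℝ} (h : b ^ 2 ≤ 4 * c)
    (M : Matrix ι ι ℝ) : 0 ≤ (M * M + b • M + c • 1).det := by
  -- `w` and `star w` are the roots of `X ^ 2 + b X + c`.
  set w : ℂ := ⟨-b / 2, √(4 * c - b ^ 2) / 2⟩
  set N : Matrix ι ι ℂ := Complex.ofRealHom.mapMatrix M
  have hsum : (b : ℂ) = -(w + star w) := by simp [w, Complex.ext_iff]; ring
  have hprod : (c : ℂ) = star w * w := by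
    have hroot : √(4 * c - b ^ 2) ^ 2 = 4 * c - b ^ 2 := Real.sq_sqrt (by linarith)
    rw [Complex.star_def, mul_comm, Complex.mul_conj, Complex.normSq_mk]
    norm_cast
    linear_combination -hroot / 4
  have hmap : Complex.ofRealHom.mapMatrix (M * M + b • M + c • 1)
      = N * N + (b : ℂ) • N + (c : ℂ) • 1 := by
    simp only [map_add, map_mul, RingHom.mapMatrix_apply,
      Matrix.map_smul' _ _ _ (map_mul Complex.ofRealHom),
      Matrix.map_one _ (map_zero Complex.ofRealHom) (map_one Complex.ofRealHom)]
    rfl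
  have hfactor : N * N + (b : ℂ) • N + (c : ℂ) • 1 = (N - w • 1) * (N - star w • 1) := by
    simp only [hsum, hprod, sub_mul, mul_sub, Matrix.mul_one, Matrix.one_mul, Matrix.mul_smul,
      Matrix.smul_mul, smul_smul, neg_smul, add_smul]
    abel
  have hconj : (N - star w • 1).det = star (N - w • 1).det := by
    have : (starRingEnd ℂ).mapMatrix (N - w • 1) = N - star w • 1 := by
      ext i j
      by_cases hij : i = j <;> simp [N, hij]
    rw [← this, ← RingHom.map_det]
    rfl
  have hcast := RingHom.map_det Complex.ofRealHom (M * M + b • M + c • 1)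
  rw [hmap, hfactor, det_mul, hconj, Complex.star_def, Complex.mul_conj] at hcast
  rw [Complex.ofReal_inj.mp hcast]
  exact Complex.normSq_nonneg _

theorem det_mul_self_sub_self_add_one_nonneg (M : Matrix ι ι ℤ) : 0 ≤ (M * M - M + 1).det := by
  have hreal := det_mul_self_add_smul_add_smul_one_nonneg (b := -1) (c := 1) (by norm_num)
    ((Int.castRingHom ℝ).mapMatrix M)
  rw [neg_one_smul, one_smul, ← sub_eq_add_neg, ← map_mul, ← map_sub,
    ← (Int.castRingHom ℝ).mapMatrix.map_one, ← map_add, ← RingHom.map_det, eq_intCast] at hreal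
  exact_mod_cast hreal

end Matrix

theorem ZMod.sign_addRight_one (n : ℕ) [NeZero n] :
    Equiv.Perm.sign (Equiv.addRight (1 : ZMod n)) = (-1) ^ (n - 1) := by
  obtain ⟨m, rfl⟩ := Nat.exists_eq_succ_of_ne_zero (NeZero.ne n)
  rw [← sign_finRotate]
  congr
  ext i
  exact (finRotate_apply i).symm

theorem cayleyAdj_eq_permMatrix_add_transpose (n : ℕ) :
    cayleyAdj n = (Equiv.addRight (1 : ZMod n)).permMatrix ℤ
      + ((Equiv.addRight (1 : ZMod n)).permMatrix ℤ)ᵀ := by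
  ext i j
  simp [cayleyAdj, PEquiv.toMatrix_apply, add_neg_eq_iff_eq_add, eq_sub_iff_add_eq,
    eq_comm (a := i + 1), eq_comm (a := j + 1)]

theorem det_one_sub_adj_transpose_nonpos (n : ℕ) [NeZero n] :
    (1 - (cayleyAdj n)ᵀ).det ≤ 0 := by
  obtain ⟨m, rfl⟩ := Nat.exists_eq_succ_of_ne_zero (NeZero.ne n)
  set P := (Equiv.addRight (1 : ZMod (m + 1))).permMatrix ℤ
  have hPP : Pᵀ * P = 1 := by
    rw [transpose_permMatrix, ← permMatrix_mul, mul_inv_cancel, permMatrix_one]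
  have hfactor : (1 - (cayleyAdj (m + 1))ᵀ) * P = -(P * P - P + 1) := by
    rw [cayleyAdj_eq_permMatrix_add_transpose, transpose_add, transpose_transpose, sub_mul,
      add_mul, hPP, Matrix.one_mul]
    abel
  have hdet := congrArg det hfactor
  rw [det_mul, det_neg, det_permutation, ZMod.sign_addRight_one, ZMod.card, Nat.add_sub_cancel,
    pow_succ] at hdet
  push_cast at hdet
  have hq := det_mul_self_sub_self_add_one_nonneg P
  rcases neg_one_pow_eq_or ℤ m with h | h <;> rw [h] at hdet <;> linarith
end

section
/- Let n be a positive integer. Then det(1 - A_nᵀ) = 0 if and only if 6 divides n. -/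
/-!
`det (1 - A_nᵀ) = 0` iff some nonzero `v : ℤ/nℤ → ℤ` satisfies `v i = v (i - 1) + v (i + 1)`.
Any such `v` satisfies `v (i + 3) = -v i`, so it has period `6` as well as period `n`, hence
period `gcd 6 n`. If `6 ∤ n` that period divides `2` or `3`, and together with the
antiperiodicity this forces `v = 0`. If `6 ∣ n`, the `6`-periodic sequence `0, 1, 1, 0, -1, -1`
is a solution.
-/

open Matrix

open Function

theorem antiperiodic_three_of_eq_pred_add_succ {S M : Type*} [CommRing S] [AddCommGroup M]
    {v : S → M} (hv : ∀ i, v i = v (i - 1) + v (i + 1)) : Antiperiodic v 3 := by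
  intro i
  have h₁ := hv (i + 1)
  have h₂ := hv (i + 2)
  rw [show i + 1 - 1 = i by ring, show i + 1 + 1 = i + 2 by ring] at h₁
  rw [show i + 2 - 1 = i + 1 by ring, show i + 2 + 1 = i + 3 by ring] at h₂
  linear_combination (norm := abel) -h₁ - h₂

theorem ZMod.periodic_gcd {α : Type*} {n c : ℕ} {v : ZMod n → α} (h : Periodic v c) :
    Periodic v (c.gcd n : ℕ) := by
  have hbezout : ((c.gcd n : ℕ) : ZMod n) = (c.gcdA n : ℤ) * c := by
    have := congrArg (Int.cast : ℤ → ZMod n) (Nat.gcd_eq_gcd_ab c n)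
    simpa [ZMod.natCast_self, mul_comm] using this
  rw [hbezout]
  exact h.int_mul _

theorem eq_zero_of_eq_pred_add_succ {M : Type*} [AddCommGroup M] [IsAddTorsionFree M] {n : ℕ}
    {v : ZMod n → M} (hv : ∀ i, v i = v (i - 1) + v (i + 1)) (h6 : ¬ 6 ∣ n) : v = 0 := by
  have hsmall : Nat.gcd 6 n ∣ 2 ∨ Nat.gcd 6 n ∣ 3 := by
    have hne : Nat.gcd 6 n ≠ 6 := fun h => h6 (h ▸ Nat.gcd_dvd_right 6 n)
    have hdvd := Nat.gcd_dvd_left 6 n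
    have hle := Nat.le_of_dvd (by norm_num) hdvd
    interval_cases Nat.gcd 6 n <;> omega
  have hanti := antiperiodic_three_of_eq_pred_add_succ hv
  have hgcd : Periodic v (Nat.gcd 6 n : ℕ) := ZMod.periodic_gcd <| by
    simpa [show (2 : ZMod n) * 3 = 6 by norm_num] using hanti.periodic_two_mul
  have hperiod : ∀ m : ℕ, Nat.gcd 6 n ∣ m → Periodic v m := fun m ⟨k, hk⟩ => by
    simpa [hk, mul_comm] using hgcd.nat_mul k
  funext i
  rcases hsmall with h2 | h3
  · have hanti1 : Antiperiodic v 1 := fun j => by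
      rw [← hanti j, ← hperiod 2 h2 (j + 1)]
      ring_nf
    have := hv i
    rw [hanti1.sub_eq, hanti1 i] at this
    exact (nsmul_eq_zero_iff_right three_ne_zero).mp (by linear_combination (norm := abel) this)
  · simpa using self_eq_neg.mp (hperiod 3 h3 i ▸ hanti i)

theorem cayleyAdj_transpose_mulVec {n : ℕ} [NeZero n] (v : ZMod n → ℤ) (i : ZMod n) :
    ((cayleyAdj n)ᵀ *ᵥ v) i = v (i - 1) + v (i + 1) := by
  have hpred (j : ZMod n) : i = j + 1 ↔ j = i - 1 := by rw [eq_sub_iff_add_eq, eq_comm]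
  have hsucc (j : ZMod n) : i = j - 1 ↔ j = i + 1 := by rw [eq_sub_iff_add_eq, eq_comm]
  simp [cayleyAdj, mulVec, dotProduct, hpred, hsucc, add_mul, Finset.sum_add_distrib]

theorem one_sub_cayleyAdj_transpose_mulVec_eq_zero_iff {n : ℕ} [NeZero n] (v : ZMod n → ℤ) :
    (1 - (cayleyAdj n)ᵀ) *ᵥ v = 0 ↔ ∀ i, v i = v (i - 1) + v (i + 1) := by
  simp only [funext_iff, sub_mulVec, one_mulVec, cayleyAdj_transpose_mulVec, sub_eq_zero]

-- `i ↦ (2 / √3) sin (π i / 3)`, a real solution of the recurrence with period 6.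
def sinPattern : ZMod 6 → ℤ := ![0, 1, 1, 0, -1, -1]

theorem sinPattern_eq_pred_add_succ (j : ZMod 6) :
    sinPattern j = sinPattern (j - 1) + sinPattern (j + 1) := by
  revert j; decide

theorem exists_ne_zero_eq_pred_add_succ {n : ℕ} (h6 : 6 ∣ n) :
    ∃ v : ZMod n → ℤ, v ≠ 0 ∧ ∀ i, v i = v (i - 1) + v (i + 1) := by
  refine ⟨fun i => sinPattern (ZMod.castHom h6 (ZMod 6) i), fun h => ?_, fun i => ?_⟩
  · have h1 : sinPattern 1 = 0 := by simpa only [map_one, Pi.zero_apply] using congrFun h 1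
    exact absurd h1 (by decide)
  · simpa only [map_sub, map_add, map_one] using
      sinPattern_eq_pred_add_succ (ZMod.castHom h6 (ZMod 6) i)

theorem det_one_sub_adj_transpose_eq_zero_iff (n : ℕ) [NeZero n] :
    (1 - (cayleyAdj n)ᵀ).det = 0 ↔ 6 ∣ n := by
  simp_rw [← exists_mulVec_eq_zero_iff, one_sub_cayleyAdj_transpose_mulVec_eq_zero_iff]
  refine ⟨fun ⟨v, hv0, hv⟩ => ?_, exists_ne_zero_eq_pred_add_succ⟩
  by_contra h6
  exact hv0 (eq_zero_of_eq_pred_add_succ hv h6)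
end
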